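/- arXiv:1506.03549 — 3 statements merged into one kernel-verified Lean document; each statement's English description precedes it below -/
import Mathlib

section
/- Let F : B1 → B2 be a continuously differentiable map between Banach spaces whose derivative is uniformly stable, and let T ∈ B(B1,B2) be bounded below. If δ_{F,T} := sup_{0≠y∈B1} sup_{z∈B1} ‖F'(z)y − Ty‖/‖Ty‖ < 1/3, then F has the bi-Lipschitz property, i.e. there exist constants A', B' > 0 with A'‖x−y‖ ≤ ‖F(x)−F(y)‖ ≤ B'‖x−y‖ for all x, y ∈ B1. -/
/-!
Along the segment from `y` to `x` the map `F - T` has derivative `F' z - T`, which moves the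
direction `x - y` by at most `δ_{F,T} ‖T (x - y)‖`; the mean value inequality then gives
`‖F x - F y - T (x - y)‖ ≤ δ_{F,T} ‖T (x - y)‖`, so `‖F x - F y‖ ≥ (1 - δ_{F,T}) c ‖x - y‖`
when `c` is a lower bound of `T`. The upper bound is the mean value inequality for `F` itself.
-/

section MeanValue

variable {E G : Type*} [NormedAddCommGroup E] [NormedSpace ℝ E]
  [NormedAddCommGroup G] [NormedSpace ℝ G]

theorem norm_sub_le_of_forall_norm_fderiv_apply_le {f : E → G} {f' : E → E →L[ℝ] G}
    (hf : ∀ z, HasFDerivAt f (f' z) z) {x y : E} {C : ℝ} (hC : ∀ z, ‖f' z (x - y)‖ ≤ C) :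
    ‖f x - f y‖ ≤ C := by
  have hline : ∀ t : ℝ, HasDerivAt (fun t : ℝ => y + t • (x - y)) (x - y) t := fun t => by
    simpa using ((hasDerivAt_id t).smul_const (x - y)).const_add y
  have hcomp := fun t => (hf _).comp_hasDerivAt t (hline t)
  simpa using norm_image_sub_le_of_norm_deriv_le_segment_01'
    (fun t _ => (hcomp t).hasDerivWithinAt) (fun t _ => hC _)

theorem norm_sub_sub_apply_le_of_forall_norm_fderiv_apply_sub_le {f : E → G}
    {f' : E → E →L[ℝ] G} (hf : ∀ z, HasFDerivAt f (f' z) z) (T : E →L[ℝ] G) {x y : E} {C : ℝ}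
    (hC : ∀ z, ‖f' z (x - y) - T (x - y)‖ ≤ C) :
    ‖f x - f y - T (x - y)‖ ≤ C := by
  have h := norm_sub_le_of_forall_norm_fderiv_apply_le (f := fun z => f z - T z)
    (f' := fun z => f' z - T) (fun z => (hf z).sub T.hasFDerivAt) hC
  rwa [map_sub, sub_sub_sub_comm]

end MeanValue

section RelativeDeviation

variable {E G : Type*} [NormedAddCommGroup E] [NormedSpace ℝ E]
  [NormedAddCommGroup G] [NormedSpace ℝ G]
  {F' : E → E →L[ℝ] G} {T : E →L[ℝ] G} {B c : ℝ}

theorem norm_apply_sub_div_norm_le (hB : ∀ z y, ‖F' z y‖ ≤ B * ‖y‖) (hc : 0 < c)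
    (hcT : ∀ y, c * ‖y‖ ≤ ‖T y‖) {y : E} (hy : y ≠ 0) (z : E) :
    ‖F' z y - T y‖ / ‖T y‖ ≤ (B + ‖T‖) / c := by
  have hnum : ‖F' z y - T y‖ ≤ (B + ‖T‖) * ‖y‖ := calc
    ‖F' z y - T y‖ ≤ ‖F' z y‖ + ‖T y‖ := norm_sub_le _ _
    _ ≤ B * ‖y‖ + ‖T‖ * ‖y‖ := add_le_add (hB z y) (T.le_opNorm y)
    _ = (B + ‖T‖) * ‖y‖ := by ring
  have hy' : 0 < ‖y‖ := norm_pos_iff.2 hy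
  calc ‖F' z y - T y‖ / ‖T y‖
      ≤ (B + ‖T‖) * ‖y‖ / (c * ‖y‖) :=
        div_le_div₀ ((norm_nonneg _).trans hnum) hnum (by positivity) (hcT y)
    _ = (B + ‖T‖) / c := mul_div_mul_right _ _ hy'.ne'

/-- The supremum is finite because the quotients are bounded by `(B + ‖T‖) / c`; without that
bound the conditional supremum would be the junk value `0`. -/
theorem norm_apply_sub_le_iSup_mul (hB : ∀ z y, ‖F' z y‖ ≤ B * ‖y‖) (hc : 0 < c)
    (hcT : ∀ y, c * ‖y‖ ≤ ‖T y‖) (y z : E) :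
    ‖F' z y - T y‖ ≤
      (⨆ y : {y : E // y ≠ 0}, ⨆ z : E, ‖F' z (y : E) - T (y : E)‖ / ‖T (y : E)‖) * ‖T y‖ := by
  rcases eq_or_ne y 0 with rfl | hy
  · simp
  have hTy : 0 < ‖T y‖ := (mul_pos hc (norm_pos_iff.2 hy)).trans_le (hcT y)
  have hbdd : BddAbove (⋃ y : {y : E // y ≠ 0}, Set.range fun z : E =>
      ‖F' z (y : E) - T (y : E)‖ / ‖T (y : E)‖) := by
    refine ⟨(B + ‖T‖) / c, ?_⟩
    rintro r ⟨_, ⟨⟨w, hw⟩, rfl⟩, z, rfl⟩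
    exact norm_apply_sub_div_norm_le hB hc hcT hw z
  rw [← div_le_iff₀ hTy]
  exact le_ciSup₂ (f := fun (y : {y : E // y ≠ 0}) (z : E) =>
    ‖F' z (y : E) - T (y : E)‖ / ‖T (y : E)‖) hbdd ⟨y, hy⟩ z

end RelativeDeviation

theorem bilipschitz_of_deltaFT_lt_third_general
    {B1 B2 : Type*} [NormedAddCommGroup B1] [NormedSpace ℝ B1]
    [NormedAddCommGroup B2] [NormedSpace ℝ B2]
    (F : B1 → B2) (F' : B1 → B1 →L[ℝ] B2)
    (hF : ∀ x : B1, HasFDerivAt F (F' x) x)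
    (A B : ℝ) (hB : 0 < B)
    (hstab : ∀ x y : B1, A * ‖y‖ ≤ ‖F' x y‖ ∧ ‖F' x y‖ ≤ B * ‖y‖)
    (T : B1 →L[ℝ] B2)
    (hTbb : ∃ c > 0, ∀ y : B1, c * ‖y‖ ≤ ‖T y‖)
    (δFT : ℝ)
    (hδdef : δFT = ⨆ y : {y : B1 // y ≠ 0}, ⨆ z : B1, ‖F' z (y : B1) - T (y : B1)‖ / ‖T (y : B1)‖)
    (hδ : δFT < 1 / 3) :
    ∃ A' B' : ℝ, 0 < A' ∧ 0 < B' ∧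
      ∀ x y : B1, A' * ‖x - y‖ ≤ ‖F x - F y‖ ∧ ‖F x - F y‖ ≤ B' * ‖x - y‖ := by
  obtain ⟨c, hc, hcT⟩ := hTbb
  have hdev : ∀ v z, ‖F' z v - T v‖ ≤ δFT * ‖T v‖ := fun v z =>
    hδdef ▸ norm_apply_sub_le_iSup_mul (fun z y => (hstab z y).2) hc hcT v z
  refine ⟨(1 - δFT) * c, B, by nlinarith, hB, fun x y => ⟨?_, ?_⟩⟩
  · have hnear : ‖F x - F y - T (x - y)‖ ≤ δFT * ‖T (x - y)‖ :=
      norm_sub_sub_apply_le_of_forall_norm_fderiv_apply_sub_le hF T fun z => hdev _ z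
    have hrev := norm_sub_norm_le (T (x - y)) (T (x - y) - (F x - F y))
    rw [sub_sub_cancel, norm_sub_rev] at hrev
    nlinarith [hcT (x - y), norm_nonneg (x - y)]
  · exact norm_sub_le_of_forall_norm_fderiv_apply_le hF fun z => (hstab z _).2

/-- For a continuously differentiable map `F` with uniformly stable derivative
and a bounded below linear operator `T`, if
`δ_{F,T} := sup_{y≠0} sup_{z} ‖F'(z)y − Ty‖/‖Ty‖ < 1/3`, then `F` is bi-Lipschitz. -/
theorem bilipschitz_of_deltaFT_lt_third
    {B1 B2 : Type*} [NormedAddCommGroup B1] [NormedSpace ℝ B1] [CompleteSpace B1]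
    [NormedAddCommGroup B2] [NormedSpace ℝ B2] [CompleteSpace B2]
    (F : B1 → B2) (F' : B1 → B1 →L[ℝ] B2)
    (hF : ∀ x : B1, HasFDerivAt F (F' x) x)
    (hF'cont : Continuous F')
    (A B : ℝ) (hA : 0 < A) (hB : 0 < B)
    (hstab : ∀ x y : B1, A * ‖y‖ ≤ ‖F' x y‖ ∧ ‖F' x y‖ ≤ B * ‖y‖)
    (T : B1 →L[ℝ] B2)
    (hTbb : ∃ c > 0, ∀ y : B1, c * ‖y‖ ≤ ‖T y‖)
    (δFT : ℝ)
    (hδdef : δFT = ⨆ y : {y : B1 // y ≠ 0}, ⨆ z : B1, ‖F' z (y : B1) - T (y : B1)‖ / ‖T (y : B1)‖)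
    (hδ : δFT < 1 / 3) :
    ∃ A' B' : ℝ, 0 < A' ∧ 0 < B' ∧
      ∀ x y : B1, A' * ‖x - y‖ ≤ ‖F x - F y‖ ∧ ‖F x - F y‖ ≤ B' * ‖x - y‖ :=
  bilipschitz_of_deltaFT_lt_third_general F F' hF A B hB hstab T hTbb δFT hδdef hδ
end

section
/- Let H1, H2 be Hilbert spaces, F : H1 → H2 a differentiable map with continuous and uniformly stable derivative, and T ∈ B(H1,H2) bounded below with β_{F,T} := sup_{0≠v} sup_{u} ‖F'(u)v/‖F'(u)v‖ − Tv/‖Tv‖‖ < √2. Set m_T := inf_{‖u‖=1} ‖Tu‖, m_F := inf_{v∈H1} inf_{‖u‖=1} ‖F'(v)u‖, and M_F := sup_{v∈H1} ‖F'(v)‖. Suppose the relaxation factor μ satisfies 0 < μ < (2 − β_{F,T}²)·m_T·m_F/(‖T‖²·M_F²). Given u₀ ∈ H1, u⁰ ∈ H1, ε ∈ H2, set z_ε := F(u⁰) + ε and define uₙ₊₁ := uₙ − μT*(F(uₙ) − z_ε) for n ≥ 0, where T* is the adjoint of T. Then uₙ converges exponentially to some u_∞ ∈ H1 satisfying ‖u_∞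 − u⁰‖ ≤ (2‖T‖/((2 − β_{F,T}²)·m_T·m_F))·‖ε‖. -/
/-!
The angle condition makes `T` and every `F'(x)` point in nearly the same direction: since
`‖a/‖a‖ - b/‖b‖‖² = 2 - 2⟪a, b⟫/(‖a‖‖b‖)`, we get `⟪T h, F'(x) h⟫ ≥ γ ‖h‖²` with
`γ = (2 - β²) m_T m_F / 2`. The iteration map `u ↦ u - μ T*(F u - z)` has derivative
`I - μ T* F'(x)`, of norm at most `√(1 - 2μγ + μ² ‖T‖² M_F²) < 1`, so it is a contraction and
Banach's fixed point theorem gives exponential convergence. At the fixed point `T*(F u_∞ - z) = 0`,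
and integrating the coercivity estimate along the segment from `u⁰` to `u_∞` gives
`γ ‖u_∞ - u⁰‖² ≤ ⟪T (u_∞ - u⁰), F u_∞ - F u⁰⟫ = ⟪T (u_∞ - u⁰), ε⟫ ≤ ‖T‖ ‖u_∞ - u⁰‖ ‖ε‖`.
-/

open ContinuousLinearMap
open scoped NNReal

lemma le_ciSup_ciSup_of_le {α : Type*} [ConditionallyCompleteLattice α] {ι κ : Sort*}
    [Nonempty κ] (f : ι → κ → α) {C : α} (hC : ∀ i j, f i j ≤ C) (i : ι) (j : κ) :
    f i j ≤ ⨆ i, ⨆ j, f i j :=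
  (le_ciSup ⟨C, Set.forall_mem_range.2 (hC i)⟩ j).trans
    (le_ciSup ⟨C, Set.forall_mem_range.2 fun i => ciSup_le (hC i)⟩ i)

lemma ContractingWith.exists_dist_iterate_fixedPoint_le {α : Type*} [MetricSpace α]
    [Nonempty α] [CompleteSpace α] {K : ℝ≥0} {f : α → α} (hf : ContractingWith K f) (x : α) :
    ∃ C > 0, ∀ n, dist (f^[n] x) (fixedPoint f hf) ≤ C * K ^ n := by
  have hK : 0 < 1 - (K : ℝ) := hf.one_sub_K_pos
  refine ⟨dist x (f x) / (1 - K) + 1, by positivity, fun n => ?_⟩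
  calc dist (f^[n] x) (fixedPoint f hf) ≤ dist x (f x) * (K : ℝ) ^ n / (1 - K) :=
        hf.apriori_dist_iterate_fixedPoint_le x n
    _ ≤ (dist x (f x) / (1 - K) + 1) * K ^ n := by
      rw [mul_div_right_comm, add_mul, one_mul]
      exact le_add_of_nonneg_right (by positivity)

section NormedSpace

variable {E F : Type*} [NormedAddCommGroup E] [NormedSpace ℝ E]
  [NormedAddCommGroup F] [NormedSpace ℝ F]

lemma norm_inv_norm_smul_le_one (w : E) : ‖‖w‖⁻¹ • w‖ ≤ 1 := by
  simpa using inv_norm_smul_mem_unitClosedBall w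

lemma iInf_norm_apply_unit_mul_le (f : E →L[ℝ] F) (h : E) :
    (⨅ u : {u : E // ‖u‖ = 1}, ‖f u‖) * ‖h‖ ≤ ‖f h‖ := by
  rcases eq_or_ne h 0 with rfl | hh
  · simp
  have hle := ciInf_le ⟨0, Set.forall_mem_range.2 fun u : {u : E // ‖u‖ = 1} => norm_nonneg (f u)⟩
    (⟨‖h‖⁻¹ • h, norm_smul_inv_norm hh⟩ : {u : E // ‖u‖ = 1})
  rwa [map_smul, norm_smul, norm_inv, norm_norm, ← div_eq_inv_mul,
    le_div_iff₀ (norm_pos_iff.2 hh)] at hle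

lemma iInf_iInf_norm_apply_unit_mul_le {ι : Sort*} (f : ι → E →L[ℝ] F) (i : ι) (h : E) :
    (⨅ j, ⨅ u : {u : E // ‖u‖ = 1}, ‖f j u‖) * ‖h‖ ≤ ‖f i h‖ := by
  refine le_trans ?_ (iInf_norm_apply_unit_mul_le (f i) h)
  gcongr
  exact ciInf_le ⟨0, Set.forall_mem_range.2 fun j => Real.iInf_nonneg fun u => norm_nonneg _⟩ i

lemma norm_normalized_sub_le_iSup {ι : Type*} [Nonempty ι] (S : ι → E →L[ℝ] F)
    (R : E →L[ℝ] F) (i : ι) {h : E} (hh : h ≠ 0) :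
    ‖‖S i h‖⁻¹ • S i h - ‖R h‖⁻¹ • R h‖ ≤
      ⨆ v : {v : E // v ≠ 0}, ⨆ j, ‖‖S j v‖⁻¹ • S j v - ‖R v‖⁻¹ • R v‖ :=
  le_ciSup_ciSup_of_le (fun (v : {v : E // v ≠ 0}) j => ‖‖S j v‖⁻¹ • S j v - ‖R v‖⁻¹ • R v‖)
    (C := 2) (fun v j => (norm_sub_le _ _).trans (by
      linarith [norm_inv_norm_smul_le_one (S j v), norm_inv_norm_smul_le_one (R v)]))
    ⟨h, hh⟩ i

end NormedSpace

section InnerProductSpace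

variable {E F : Type*} [NormedAddCommGroup E] [NormedSpace ℝ E]
  [NormedAddCommGroup F] [InnerProductSpace ℝ F]

lemma le_real_inner_of_normalized_sub_le {a b : F} {β : ℝ}
    (h : ‖‖a‖⁻¹ • a - ‖b‖⁻¹ • b‖ ≤ β) :
    (2 - β ^ 2) / 2 * (‖a‖ * ‖b‖) ≤ inner ℝ a b := by
  rcases eq_or_ne a 0 with rfl | ha
  · simp
  rcases eq_or_ne b 0 with rfl | hb
  · simp
  have hsq := pow_le_pow_left₀ (norm_nonneg _) h 2
  have ha1 : ‖‖a‖⁻¹ • a‖ = 1 := norm_smul_inv_norm ha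
  have hb1 : ‖‖b‖⁻¹ • b‖ = 1 := norm_smul_inv_norm hb
  rw [norm_sub_sq_real, ha1, hb1, real_inner_smul_left, real_inner_smul_right] at hsq
  have hab : 0 < ‖a‖ * ‖b‖ := by positivity
  have hcos : inner ℝ a b = ‖a‖ * ‖b‖ * (‖a‖⁻¹ * (‖b‖⁻¹ * inner ℝ a b)) := by
    field_simp
  rw [hcos]
  nlinarith

lemma mul_norm_sq_le_real_inner_apply_of_normalized_sub_le {S R : E →L[ℝ] F} {β mR mS : ℝ}
    (hβ : ∀ h ≠ 0, ‖‖S h‖⁻¹ • S h - ‖R h‖⁻¹ • R h‖ ≤ β) (hβ2 : β ^ 2 ≤ 2) (hmS : 0 ≤ mS)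
    (hR : ∀ h, mR * ‖h‖ ≤ ‖R h‖) (hS : ∀ h, mS * ‖h‖ ≤ ‖S h‖) (h : E) :
    (2 - β ^ 2) * mR * mS / 2 * ‖h‖ ^ 2 ≤ inner ℝ (R h) (S h) := by
  rcases eq_or_ne h 0 with rfl | hh
  · simp
  calc (2 - β ^ 2) * mR * mS / 2 * ‖h‖ ^ 2
      = (2 - β ^ 2) / 2 * ((mR * ‖h‖) * (mS * ‖h‖)) := by ring
    _ ≤ (2 - β ^ 2) / 2 * (‖R h‖ * ‖S h‖) :=
      mul_le_mul_of_nonneg_left (mul_le_mul (hR h) (hS h) (by positivity) (norm_nonneg _))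
        (by linarith)
    _ ≤ inner ℝ (R h) (S h) :=
      le_real_inner_of_normalized_sub_le ((norm_sub_rev _ _).trans_le (hβ h hh))

lemma mul_norm_sub_sq_le_real_inner_sub {Φ : E → F} {Φ' : E → E →L[ℝ] F} {T : E →L[ℝ] F}
    {γ : ℝ} (hΦ : ∀ x, HasFDerivAt Φ (Φ' x) x)
    (hγ : ∀ x h, γ * ‖h‖ ^ 2 ≤ inner ℝ (T h) (Φ' x h)) (x y : E) :
    γ * ‖y - x‖ ^ 2 ≤ inner ℝ (T (y - x)) (Φ y - Φ x) := by
  set d := y - x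
  let φ : ℝ → ℝ := fun t => inner ℝ (T d) (Φ (x + t • d)) - γ * ‖d‖ ^ 2 * t
  have hφ : ∀ t, HasDerivAt φ (inner ℝ (T d) (Φ' (x + t • d) d) - γ * ‖d‖ ^ 2) t := by
    intro t
    have hline : HasDerivAt (fun t : ℝ => x + t • d) d t := by
      simpa using ((hasDerivAt_id t).smul_const d).const_add x
    exact ((innerSL ℝ (T d)).hasFDerivAt.comp_hasDerivAt t ((hΦ _).comp_hasDerivAt t hline)).sub
      (by simpa using (hasDerivAt_id t).const_mul (γ * ‖d‖ ^ 2))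
  have hmono : φ 0 ≤ φ 1 :=
    monotone_of_hasDerivAt_nonneg hφ (fun t => sub_nonneg.2 (hγ _ d)) zero_le_one
  simp only [φ, zero_smul, add_zero, mul_zero, sub_zero, one_smul, mul_one, d,
    add_sub_cancel] at hmono
  rw [inner_sub_right]
  linarith

end InnerProductSpace

section VanCittert

variable {E F : Type*} [NormedAddCommGroup E] [InnerProductSpace ℝ E] [CompleteSpace E]
  [NormedAddCommGroup F] [InnerProductSpace ℝ F] [CompleteSpace F]

noncomputable def vanCittertStep (T : E →L[ℝ] F) (Φ : E → F) (μ : ℝ) (z : F) (u : E) : E :=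
  u - μ • adjoint T (Φ u - z)

variable {T : E →L[ℝ] F} {Φ : E → F} {μ : ℝ} {z : F}

lemma hasFDerivAt_vanCittertStep {Φ' : E →L[ℝ] F} {x : E} (hΦ : HasFDerivAt Φ Φ' x) :
    HasFDerivAt (vanCittertStep T Φ μ z) (ContinuousLinearMap.id ℝ E - μ • (adjoint T).comp Φ') x :=
  (hasFDerivAt_id x).sub (((adjoint T).hasFDerivAt.comp x (hΦ.sub_const z)).const_smul μ)

lemma adjoint_apply_eq_zero_of_vanCittertStep_eq_self (hμ : μ ≠ 0) {u : E}
    (hu : vanCittertStep T Φ μ z u = u) : adjoint T (Φ u - z) = 0 :=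
  (smul_eq_zero.1 (sub_eq_self.1 hu)).resolve_left hμ

lemma norm_sub_smul_adjoint_apply_sq_le {S : E →L[ℝ] F} {γ M : ℝ}
    (hγ : ∀ h, γ * ‖h‖ ^ 2 ≤ inner ℝ (T h) (S h)) (hS : ‖S‖ ≤ M) (hμ : 0 ≤ μ) (h : E) :
    ‖h - μ • adjoint T (S h)‖ ^ 2 ≤ (1 - 2 * μ * γ + μ ^ 2 * ‖T‖ ^ 2 * M ^ 2) * ‖h‖ ^ 2 := by
  have hsmall : ‖μ • adjoint T (S h)‖ ≤ μ * (‖T‖ * (M * ‖h‖)) := by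
    rw [norm_smul, Real.norm_of_nonneg hμ]
    gcongr
    calc ‖adjoint T (S h)‖ ≤ ‖adjoint T‖ * ‖S h‖ := le_opNorm _ _
      _ ≤ ‖T‖ * (M * ‖h‖) := by
        rw [LinearIsometryEquiv.norm_map]
        gcongr
        exact S.le_of_opNorm_le hS h
  have hsq := pow_le_pow_left₀ (norm_nonneg _) hsmall 2
  rw [norm_sub_sq_real, real_inner_smul_right, adjoint_inner_right]
  nlinarith [mul_le_mul_of_nonneg_left (hγ h) hμ]

lemma norm_id_sub_smul_adjoint_comp_le {S : E →L[ℝ] F} {γ M : ℝ}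
    (hγ : ∀ h, γ * ‖h‖ ^ 2 ≤ inner ℝ (T h) (S h)) (hS : ‖S‖ ≤ M) (hμ : 0 ≤ μ) :
    ‖ContinuousLinearMap.id ℝ E - μ • (adjoint T).comp S‖ ≤
      √(1 - 2 * μ * γ + μ ^ 2 * ‖T‖ ^ 2 * M ^ 2) := by
  refine opNorm_le_bound _ (Real.sqrt_nonneg _) fun h => ?_
  calc ‖(ContinuousLinearMap.id ℝ E - μ • (adjoint T).comp S) h‖
      = √(‖h - μ • adjoint T (S h)‖ ^ 2) := by simp
    _ ≤ √((1 - 2 * μ * γ + μ ^ 2 * ‖T‖ ^ 2 * M ^ 2) * ‖h‖ ^ 2) :=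
      Real.sqrt_le_sqrt (norm_sub_smul_adjoint_apply_sq_le hγ hS hμ h)
    _ = _ := by rw [Real.sqrt_mul' _ (sq_nonneg _), Real.sqrt_sq (norm_nonneg _)]

lemma exists_contractingWith_vanCittertStep {Φ' : E → E →L[ℝ] F} {γ M : ℝ}
    (hΦ : ∀ x, HasFDerivAt Φ (Φ' x) x) (hγ : ∀ x h, γ * ‖h‖ ^ 2 ≤ inner ℝ (T h) (Φ' x h))
    (hM : ∀ x, ‖Φ' x‖ ≤ M) (hμ : 0 < μ) (hμγ : μ * (‖T‖ ^ 2 * M ^ 2) < 2 * γ) :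
    ∃ r : ℝ≥0, 0 < r ∧ ContractingWith r (vanCittertStep T Φ μ z) := by
  set r := max √(1 - 2 * μ * γ + μ ^ 2 * ‖T‖ ^ 2 * M ^ 2) (1 / 2)
  have hr0 : 0 < r := lt_max_of_lt_right one_half_pos
  have hr1 : r < 1 := max_lt ((Real.sqrt_lt' one_pos).2 (by nlinarith)) (by norm_num)
  refine ⟨r.toNNReal, Real.toNNReal_pos.2 hr0, Real.toNNReal_lt_one.2 hr1, ?_⟩
  rw [← lipschitzOnWith_univ]
  refine convex_univ.lipschitzOnWith_of_nnnorm_hasFDerivWithin_le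
    (fun x _ => (hasFDerivAt_vanCittertStep (hΦ x)).hasFDerivWithinAt) fun x _ => ?_
  rw [Real.le_toNNReal_iff_coe_le hr0.le, coe_nnnorm]
  exact (norm_id_sub_smul_adjoint_comp_le (hγ x) (hM x) hμ.le).trans (le_max_left _ _)

lemma norm_sub_le_of_adjoint_apply_eq_zero {Φ' : E → E →L[ℝ] F} {γ : ℝ}
    (hΦ : ∀ x, HasFDerivAt Φ (Φ' x) x) (hγ : ∀ x h, γ * ‖h‖ ^ 2 ≤ inner ℝ (T h) (Φ' x h))
    (hγpos : 0 < γ) {u u₀ : E} {ε : F} (hu : adjoint T (Φ u - (Φ u₀ + ε)) = 0) :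
    ‖u - u₀‖ ≤ ‖T‖ / γ * ‖ε‖ := by
  have hres : inner ℝ (T (u - u₀)) (Φ u - (Φ u₀ + ε)) = 0 := by
    rw [← adjoint_inner_right, hu, inner_zero_right]
  have hcoer := mul_norm_sub_sq_le_real_inner_sub hΦ hγ u₀ u
  have hε : inner ℝ (T (u - u₀)) (Φ u - Φ u₀) ≤ ‖T‖ * ‖u - u₀‖ * ‖ε‖ := by
    rw [show Φ u - Φ u₀ = (Φ u - (Φ u₀ + ε)) + ε by abel, inner_add_right, hres, zero_add]
    exact (real_inner_le_norm _ _).trans (by gcongr; exact le_opNorm _ _)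
  rw [div_mul_eq_mul_div, le_div_iff₀ hγpos]
  rcases (norm_nonneg (u - u₀)).eq_or_lt with hd | hd
  · rw [← hd, zero_mul]
    positivity
  · nlinarith

end VanCittert

theorem hilbert_van_cittert_algorithm_general
    {H1 H2 : Type*} [NormedAddCommGroup H1] [InnerProductSpace ℝ H1] [CompleteSpace H1]
    [NormedAddCommGroup H2] [InnerProductSpace ℝ H2] [CompleteSpace H2]
    (F : H1 → H2) (F' : H1 → H1 →L[ℝ] H2)
    (hF : ∀ x : H1, HasFDerivAt F (F' x) x)
    (A B : ℝ) (hB : 0 < B)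
    (hstab : ∀ x y : H1, A * ‖y‖ ≤ ‖F' x y‖ ∧ ‖F' x y‖ ≤ B * ‖y‖)
    (T : H1 →L[ℝ] H2)
    (βFT mT mF MF : ℝ)
    (hβdef : βFT = ⨆ v : {v : H1 // v ≠ 0}, ⨆ u : H1,
        ‖(‖F' u (v : H1)‖)⁻¹ • F' u (v : H1) - (‖T (v : H1)‖)⁻¹ • T (v : H1)‖)
    (hmT : mT = ⨅ u : {u : H1 // ‖u‖ = 1}, ‖T (u : H1)‖)
    (hmF : mF = ⨅ v : H1, ⨅ u : {u : H1 // ‖u‖ = 1}, ‖F' v (u : H1)‖)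
    (hMF : MF = ⨆ v : H1, ‖F' v‖)
    (μ : ℝ) (hμ0 : 0 < μ) (hμlt : μ < (2 - βFT ^ 2) * mT * mF / (‖T‖ ^ 2 * MF ^ 2))
    (uref : H1) (ε : H2)
    (useq : ℕ → H1)
    (hrec : ∀ n : ℕ,
      useq (n + 1) = useq n - μ • (ContinuousLinearMap.adjoint T) (F (useq n) - (F uref + ε))) :
    ∃ uinf : H1, ∃ C r : ℝ, 0 < C ∧ 0 < r ∧ r < 1 ∧
      (∀ n : ℕ, ‖useq n - uinf‖ ≤ C * r ^ n) ∧
      ‖uinf - uref‖ ≤ 2 * ‖T‖ / ((2 - βFT ^ 2) * mT * mF) * ‖ε‖ := by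
  have hmT0 : 0 ≤ mT := hmT ▸ Real.iInf_nonneg fun u => norm_nonneg _
  have hmF0 : 0 ≤ mF := hmF ▸ Real.iInf_nonneg fun v => Real.iInf_nonneg fun u => norm_nonneg _
  have hMF_ge : ∀ x, ‖F' x‖ ≤ MF := fun x => hMF ▸ le_ciSup ⟨B, Set.forall_mem_range.2 fun v =>
    opNorm_le_bound _ hB.le fun y => (hstab v y).2⟩ x
  -- A zero denominator in `hμlt` would make its right-hand side `0`, contradicting `0 < μ`.
  have hden : 0 < ‖T‖ ^ 2 * MF ^ 2 := by
    refine (by positivity : 0 ≤ ‖T‖ ^ 2 * MF ^ 2).lt_of_ne fun h => ?_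
    rw [← h, div_zero] at hμlt
    linarith
  set γ := (2 - βFT ^ 2) * mT * mF / 2 with hγ
  have hμγ : μ * (‖T‖ ^ 2 * MF ^ 2) < 2 * γ := by
    rw [lt_div_iff₀ hden] at hμlt
    linarith
  have hγpos : 0 < γ := by nlinarith
  have hβ2 : βFT ^ 2 ≤ 2 := by nlinarith [mul_nonneg hmT0 hmF0]
  have hcoer : ∀ x h, γ * ‖h‖ ^ 2 ≤ inner ℝ (T h) (F' x h) := fun x =>
    mul_norm_sq_le_real_inner_apply_of_normalized_sub_le
      (fun h hh => hβdef ▸ norm_normalized_sub_le_iSup F' T x hh) hβ2 hmF0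
      (fun h => hmT ▸ iInf_norm_apply_unit_mul_le T h)
      (fun h => hmF ▸ iInf_iInf_norm_apply_unit_mul_le F' x h)
  obtain ⟨r, hr0, hg⟩ :=
    exists_contractingWith_vanCittertStep (z := F uref + ε) hF hcoer hMF_ge hμ0 hμγ
  obtain ⟨C, hC, hconv⟩ := hg.exists_dist_iterate_fixedPoint_le (useq 0)
  have hiter : ∀ n, useq n = (vanCittertStep T F μ (F uref + ε))^[n] (useq 0) := by
    intro n
    induction n with
    | zero => rfl
    | succ n ih => rw [Function.iterate_succ_apply', ← ih, hrec n]; rfl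
  refine ⟨ContractingWith.fixedPoint _ hg, C, r, hC, mod_cast hr0, mod_cast hg.1,
    fun n => ?_, ?_⟩
  · rw [hiter n, ← dist_eq_norm]
    exact hconv n
  · refine (norm_sub_le_of_adjoint_apply_eq_zero hF hcoer hγpos
      (adjoint_apply_eq_zero_of_vanCittertStep_eq_self hμ0.ne' hg.fixedPoint_isFixedPt)).trans_eq ?_
    rw [hγ]
    field_simp

/-- Exponential convergence of the Van-Cittert type algorithm
`uₙ₊₁ = uₙ − μ T*(F(uₙ) − z_ε)` in Hilbert spaces, when `β_{F,T} < √2` and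
`0 < μ < (2−β²)·m_T·m_F/(‖T‖²·M_F²)`, with suboptimal limit
`‖u_∞ − u⁰‖ ≤ (2‖T‖/((2−β²)·m_T·m_F))·‖ε‖`. -/
theorem hilbert_van_cittert_algorithm
    {H1 H2 : Type*} [NormedAddCommGroup H1] [InnerProductSpace ℝ H1] [CompleteSpace H1]
    [NormedAddCommGroup H2] [InnerProductSpace ℝ H2] [CompleteSpace H2]
    (F : H1 → H2) (F' : H1 → H1 →L[ℝ] H2)
    (hF : ∀ x : H1, HasFDerivAt F (F' x) x)
    (hF'cont : Continuous F')
    (A B : ℝ) (hA : 0 < A) (hB : 0 < B)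
    (hstab : ∀ x y : H1, A * ‖y‖ ≤ ‖F' x y‖ ∧ ‖F' x y‖ ≤ B * ‖y‖)
    (T : H1 →L[ℝ] H2)
    (hTbb : ∃ c > 0, ∀ y : H1, c * ‖y‖ ≤ ‖T y‖)
    (βFT mT mF MF : ℝ)
    (hβdef : βFT = ⨆ v : {v : H1 // v ≠ 0}, ⨆ u : H1,
        ‖(‖F' u (v : H1)‖)⁻¹ • F' u (v : H1) - (‖T (v : H1)‖)⁻¹ • T (v : H1)‖)
    (hβ : βFT < Real.sqrt 2)
    (hmT : mT = ⨅ u : {u : H1 // ‖u‖ = 1}, ‖T (u : H1)‖)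
    (hmF : mF = ⨅ v : H1, ⨅ u : {u : H1 // ‖u‖ = 1}, ‖F' v (u : H1)‖)
    (hMF : MF = ⨆ v : H1, ‖F' v‖)
    (μ : ℝ) (hμ0 : 0 < μ) (hμlt : μ < (2 - βFT ^ 2) * mT * mF / (‖T‖ ^ 2 * MF ^ 2))
    (u₀ uref : H1) (ε : H2)
    (useq : ℕ → H1) (hu0 : useq 0 = u₀)
    (hrec : ∀ n : ℕ,
      useq (n + 1) = useq n - μ • (ContinuousLinearMap.adjoint T) (F (useq n) - (F uref + ε))) :
    ∃ uinf : H1, ∃ C r : ℝ, 0 < C ∧ 0 < r ∧ r < 1 ∧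
      (∀ n : ℕ, ‖useq n - uinf‖ ≤ C * r ^ n) ∧
      ‖uinf - uref‖ ≤ 2 * ‖T‖ / ((2 - βFT ^ 2) * mT * mF) * ‖ε‖ :=
  hilbert_van_cittert_algorithm_general F F' hF A B hB hstab T βFT mT mF MF hβdef hmT hmF hMF μ hμ0
    hμlt uref ε useq hrec
end

section
/- Let (A, M, H1) be a sparse approximation triple with constants s_A and a_A, let H2 be a Hilbert space, and let F : H1 → H2 be a bounded linear operator that has the sparse Riesz property ‖F(x)‖ ≥ D⁻¹(‖x‖_{H1} − β√a_A·σ_{A,M}(x)) for all x ∈ M, with D > 0 and β ∈ (0, 1/√(a_A s_A)). Then for every x⁰ ∈ M and ε > 0, the solution x⁰_M := argmin{‖x̂‖_M : x̂ ∈ M, ‖F(x̂) − F(x⁰)‖ ≤ ε} satisfies ‖x⁰_M − x⁰‖_{H1} ≤ ((2 + 4β)/(1 − β√(a_A s_A)))·√a_A·σ_{A,M}(x⁰) + ((2 + √(a_A s_A))·D/(1 − β√(a_A s_A)))·ε and ‖x⁰_M − x⁰‖_M ≤ ((2 + 2β√(a_A s_A))/(1 − β√(a_A s_A)))·σ_{A,M}(x⁰)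 + (2D/(1 − β√(a_A s_A)))·√(s_A)·ε. -/
/-- A set-valued "best approximator": `y` is a best approximation of `x` in `K` (w.r.t. the norm
of `M`). -/
def IsBestApprox {M : Type*} [NormedAddCommGroup M] (K : Set M) (x y : M) : Prop :=
  y ∈ K ∧ ∀ z ∈ K, ‖x - y‖ ≤ ‖x - z‖

/-- A sparse approximation triple `(A, M, H1)`: the Banach space `M` is continuously embedded
into the Hilbert space `H1` via `j` with embedding norm at most one, `A = ⋃ i, A_i` is a union of
closed linear subspaces, every nonempty closed subset of `M` is proximinal, best approximators
onto each `A_i` w.r.t. the `M`-norm are also best approximators w.r.t. the `H1`-norm, the norms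
split along such best approximators, and `⋃_{k ≥ 1} kA` is dense in `H1`. -/
structure SparseApproxTriple (H1 : Type*) [NormedAddCommGroup H1] [InnerProductSpace ℝ H1]
    (M : Type*) [NormedAddCommGroup M] [NormedSpace ℝ M] (I : Type*) where
  /-- the (injective, norm at most one) embedding of `M` into `H1` -/
  j : M →ₗ[ℝ] H1
  j_inj : Function.Injective j
  j_norm_le : ∀ x : M, ‖j x‖ ≤ ‖x‖
  /-- the subspaces whose union is `A` -/
  Asub : I → Submodule ℝ M
  index_nonempty : Nonempty I
  Asub_closed : ∀ i : I, IsClosed (Asub i : Set M)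
  A_closed : IsClosed (⋃ i : I, (Asub i : Set M))
  /-- proximinality: every nonempty closed subset of `M` is proximinal -/
  prox : ∀ K : Set M, K.Nonempty → IsClosed K → ∀ x : M, ∃ y ∈ K, ∀ z ∈ K, ‖x - y‖ ≤ ‖x - z‖
  /-- common best approximator property -/
  common_best : ∀ (i : I) (x y : M), y ∈ Asub i → (∀ z ∈ Asub i, ‖x - y‖ ≤ ‖x - z‖) →
    ∀ z ∈ Asub i, ‖j x - j y‖ ≤ ‖j x - j z‖
  /-- norm splitting in `M` -/
  norm_split_M : ∀ (i : I) (x y : M), y ∈ Asub i → (∀ z ∈ Asub i, ‖x - y‖ ≤ ‖x - z‖) →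
    ‖x‖ = ‖y‖ + ‖x - y‖
  /-- norm splitting in `H1` -/
  norm_split_H : ∀ (i : I) (x y : M), y ∈ Asub i → (∀ z ∈ Asub i, ‖x - y‖ ≤ ‖x - z‖) →
    ‖j x‖ ^ 2 = ‖j y‖ ^ 2 + ‖j x - j y‖ ^ 2
  /-- the embedding of `A` into `M` is bounded (so that the sparsity `s_A` is finite) -/
  sA_bddAbove : BddAbove
    {r : ℝ | ∃ x : M, x ∈ (⋃ i : I, (Asub i : Set M)) ∧ x ≠ 0 ∧ r = ‖x‖ / ‖j x‖}
  /-- sparse density: `⋃_{k ≥ 1} kA` is dense in `H1` -/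
  sparse_dense : Dense (⋃ k : ℕ, {u : H1 | ∃ f : Fin (k + 1) → M,
    (∀ n, f n ∈ ⋃ i : I, (Asub i : Set M)) ∧ u = ∑ n, j (f n)})

namespace SparseApproxTriple

variable {H1 : Type*} [NormedAddCommGroup H1] [InnerProductSpace ℝ H1]
  {M : Type*} [NormedAddCommGroup M] [NormedSpace ℝ M] {I : Type*}

/-- The union `A = ⋃ i, A_i`, as a subset of `M`. -/
def A (S : SparseApproxTriple H1 M I) : Set M := ⋃ i : I, (S.Asub i : Set M)

/-- `σ_{A,M}(x) := inf_{z ∈ A} ‖x − z‖_M`, the best sparse approximation error. -/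
noncomputable def sigma (S : SparseApproxTriple H1 M I) (x : M) : ℝ :=
  sInf ((fun z => ‖x - z‖) '' S.A)

/-- The sparsity `s_A := (sup_{0 ≠ x ∈ A} ‖x‖_M/‖x‖_{H1})²`. -/
noncomputable def sA (S : SparseApproxTriple H1 M I) : ℝ :=
  (sSup {r : ℝ | ∃ x : M, x ∈ S.A ∧ x ≠ 0 ∧ r = ‖x‖ / ‖S.j x‖}) ^ 2

/-- The sparse approximation ratio
`a_A := sup_{0 ≠ x ∈ M} (‖u_{A,M}‖_{H1}/‖x_{A,M}‖_M)²`, where `x_{A,M}` is a best approximator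
of `x` in `A` and `u_{A,M}` a best approximator of `x − x_{A,M}` in `A` (both w.r.t. the norm of
`M`). -/
noncomputable def aA (S : SparseApproxTriple H1 M I) : ℝ :=
  sSup {r : ℝ | ∃ x xa u : M, x ≠ 0 ∧ IsBestApprox S.A x xa ∧
    IsBestApprox S.A (x - xa) u ∧ r = (‖S.j u‖ / ‖xa‖) ^ 2}

/-- `kA := {x₁ + ⋯ + x_k : x₁, …, x_k ∈ A}`. -/
def sumSet (S : SparseApproxTriple H1 M I) (k : ℕ) : Set M :=
  {x : M | ∃ f : Fin k → M, (∀ n, f n ∈ S.A) ∧ x = ∑ n, f n}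

end SparseApproxTriple

/-!
Put `h := xm - x0`, let `xa ∈ A_i` be a best approximation of `x0` in `A`, and `w` the best
approximation of `h` in the subspace `A_i`. Minimality gives `‖x0 + h‖ ≤ ‖x0‖`; since `xa` is also
a best approximation of `xa + (h - w)` in `A_i`, norm splitting turns this into the cone condition
`‖h - w‖ ≤ 2 σ(x0) + ‖w‖`, while `‖w‖ ≤ √s_A ‖j w‖ ≤ √s_A ‖j h‖`. So both `σ(h)` and `‖h‖` are at
most `2 σ(x0) + O(√s_A ‖j h‖)`, and the sparse Riesz property for `h`, with `‖F (j h)‖ ≤ ε`,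
bounds `‖j h‖` because `β √(a_A s_A) < 1`.
-/

theorem IsBestApprox.mono {M : Type*} [NormedAddCommGroup M] {K L : Set M} {x y : M}
    (h : IsBestApprox K x y) (hy : y ∈ L) (hLK : L ⊆ K) : IsBestApprox L x y :=
  ⟨hy, fun z hz => h.2 z (hLK hz)⟩

theorem IsBestApprox.add_sub {R M : Type*} [Ring R] [NormedAddCommGroup M] [Module R M]
    {V : Submodule R M} {h w y : M} (hw : IsBestApprox V h w) (hy : y ∈ V) : IsBestApprox V (y + (h - w)) y := by
  refine ⟨hy, fun z hz => ?_⟩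
  have hz' : w + (z - y) ∈ V := V.add_mem hw.1 (V.sub_mem hz hy)
  convert hw.2 _ hz' using 2 <;> abel

namespace SparseApproxTriple

variable {H1 : Type*} [NormedAddCommGroup H1] [InnerProductSpace ℝ H1]
  {M : Type*} [NormedAddCommGroup M] [NormedSpace ℝ M] {I : Type*}
  (S : SparseApproxTriple H1 M I)

theorem zero_mem_A : (0 : M) ∈ S.A :=
  Set.mem_iUnion.mpr ⟨Classical.choice S.index_nonempty, zero_mem _⟩

theorem exists_isBestApprox_A (x : M) : ∃ y, IsBestApprox S.A x y :=
  S.prox S.A ⟨0, S.zero_mem_A⟩ S.A_closed x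

theorem exists_isBestApprox_Asub (i : I) (x : M) : ∃ y, IsBestApprox (S.Asub i) x y :=
  S.prox _ ⟨0, zero_mem _⟩ (S.Asub_closed i) x

theorem sigma_le {x z : M} (hz : z ∈ S.A) : S.sigma x ≤ ‖x - z‖ :=
  csInf_le ⟨0, by rintro _ ⟨_, _, rfl⟩; exact norm_nonneg _⟩ ⟨z, hz, rfl⟩

theorem sigma_eq_of_isBestApprox {x y : M} (hy : IsBestApprox S.A x y) :
    S.sigma x = ‖x - y‖ :=
  le_antisymm (S.sigma_le hy.1) <|
    le_csInf ⟨_, y, hy.1, rfl⟩ (by rintro _ ⟨z, hz, rfl⟩; exact hy.2 z hz)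

theorem sA_nonneg : 0 ≤ S.sA := sq_nonneg _

theorem norm_le_sqrt_sA_mul {x : M} (hx : x ∈ S.A) : ‖x‖ ≤ √S.sA * ‖S.j x‖ := by
  rcases eq_or_ne x 0 with rfl | hx0
  · simp
  have hjx : 0 < ‖S.j x‖ :=
    norm_pos_iff.mpr fun h => hx0 (S.j_inj (h.trans (map_zero S.j).symm))
  have hle : ‖x‖ / ‖S.j x‖ ≤ √S.sA := by
    rw [sA, Real.sqrt_sq_eq_abs]
    exact (le_csSup S.sA_bddAbove ⟨x, hx, hx0, rfl⟩).trans (le_abs_self _)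
  rwa [div_le_iff₀ hjx] at hle

theorem norm_j_le_of_isBestApprox {i : I} {x y : M} (hy : IsBestApprox (S.Asub i) x y) :
    ‖S.j y‖ ≤ ‖S.j x‖ := by
  have := S.norm_split_H i x y hy.1 hy.2
  nlinarith [norm_nonneg (S.j y), norm_nonneg (S.j x), sq_nonneg ‖S.j x - S.j y‖]

/-- The cone condition: `y + (h - w)` splits at `y`, and the triangle inequality through `x + h`
bounds its norm. -/
theorem norm_sub_le_of_norm_add_le {i : I} {x y h w : M} (hy : IsBestApprox (S.Asub i) x y)
    (hw : IsBestApprox (S.Asub i) h w) (hxh : ‖x + h‖ ≤ ‖x‖) :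
    ‖h - w‖ ≤ 2 * ‖x - y‖ + ‖w‖ := by
  have hsplit_x := S.norm_split_M i x y hy.1 hy.2
  have hbest := hw.add_sub hy.1
  have hsplit := S.norm_split_M i _ y hbest.1 hbest.2
  have htri : ‖y + (h - w)‖ ≤ ‖x + h‖ + (‖x - y‖ + ‖w‖) :=
    calc ‖y + (h - w)‖ = ‖(x + h) - ((x - y) + w)‖ := by congr 1; abel
      _ ≤ ‖x + h‖ + ‖(x - y) + w‖ := norm_sub_le _ _
      _ ≤ ‖x + h‖ + (‖x - y‖ + ‖w‖) := by gcongr; exact norm_add_le _ _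
  rw [add_sub_cancel_left] at hsplit
  linarith

theorem exists_mem_A_of_norm_add_le {x y h : M} (hy : IsBestApprox S.A x y)
    (hxh : ‖x + h‖ ≤ ‖x‖) :
    ∃ w ∈ S.A, ‖w‖ ≤ √S.sA * ‖S.j h‖ ∧ ‖h - w‖ ≤ 2 * S.sigma x + ‖w‖ := by
  obtain ⟨i, hyi⟩ := Set.mem_iUnion.mp hy.1
  obtain ⟨w, hw⟩ := S.exists_isBestApprox_Asub i h
  have hwA : w ∈ S.A := Set.mem_iUnion.mpr ⟨i, hw.1⟩
  refine ⟨w, hwA, ?_, ?_⟩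
  · exact (S.norm_le_sqrt_sA_mul hwA).trans <| by
      gcongr; exact S.norm_j_le_of_isBestApprox hw
  · rw [S.sigma_eq_of_isBestApprox hy]
    exact S.norm_sub_le_of_norm_add_le (hy.mono hyi (Set.subset_iUnion_of_subset i le_rfl)) hw hxh

theorem sigma_le_of_norm_add_le {x y h : M} (hy : IsBestApprox S.A x y)
    (hxh : ‖x + h‖ ≤ ‖x‖) : S.sigma h ≤ 2 * S.sigma x + √S.sA * ‖S.j h‖ := by
  obtain ⟨w, hwA, hw, hhw⟩ := S.exists_mem_A_of_norm_add_le hy hxh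
  linarith [S.sigma_le (x := h) hwA]

theorem norm_le_of_norm_add_le {x y h : M} (hy : IsBestApprox S.A x y)
    (hxh : ‖x + h‖ ≤ ‖x‖) : ‖h‖ ≤ 2 * S.sigma x + 2 * √S.sA * ‖S.j h‖ := by
  obtain ⟨w, -, hw, hhw⟩ := S.exists_mem_A_of_norm_add_le hy hxh
  have := norm_le_norm_add_norm_sub' h w
  linarith

end SparseApproxTriple

theorem mul_lt_one_of_lt_one_div {β c : ℝ} (hβ : 0 < β) (h : β < 1 / c) : β * c < 1 := by
  rcases le_or_gt c 0 with hc | hc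
  · nlinarith
  · rwa [lt_div_iff₀ hc] at h

theorem sparse_optimization_suboptimal_linear_general
    {H1 : Type*} [NormedAddCommGroup H1] [InnerProductSpace ℝ H1]
    {H2 : Type*} [NormedAddCommGroup H2] [InnerProductSpace ℝ H2]
    {M : Type*} [NormedAddCommGroup M] [NormedSpace ℝ M]
    {I : Type*} (S : SparseApproxTriple H1 M I)
    (F : H1 →L[ℝ] H2)
    (D β : ℝ) (hD : 0 < D) (hβ0 : 0 < β) (hβ1 : β < 1 / Real.sqrt (S.aA * S.sA))
    (hSRP : ∀ x : M,
      D⁻¹ * (‖S.j x‖ - β * Real.sqrt S.aA * S.sigma x) ≤ ‖F (S.j x)‖)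
    (x0 : M) (ε : ℝ)
    (xm : M) (hfeas : ‖F (S.j xm) - F (S.j x0)‖ ≤ ε)
    (hmin : ∀ y : M, ‖F (S.j y) - F (S.j x0)‖ ≤ ε → ‖xm‖ ≤ ‖y‖) :
    ‖S.j xm - S.j x0‖ ≤
        (2 + 4 * β) / (1 - β * Real.sqrt (S.aA * S.sA)) * Real.sqrt S.aA * S.sigma x0 +
        (2 + Real.sqrt (S.aA * S.sA)) * D / (1 - β * Real.sqrt (S.aA * S.sA)) * ε ∧
      ‖xm - x0‖ ≤
        (2 + 2 * β * Real.sqrt (S.aA * S.sA)) / (1 - β * Real.sqrt (S.aA * S.sA)) * S.sigma x0 +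
        2 * D / (1 - β * Real.sqrt (S.aA * S.sA)) * Real.sqrt S.sA * ε := by
  obtain ⟨xa, hxa⟩ := S.exists_isBestApprox_A x0
  have hε : 0 ≤ ε := (norm_nonneg _).trans hfeas
  have hσ0 : 0 ≤ S.sigma x0 := S.sigma_eq_of_isBestApprox hxa ▸ norm_nonneg _
  have hcone : ‖x0 + (xm - x0)‖ ≤ ‖x0‖ := by simpa using hmin x0 (by simpa using hε)
  have hσ := S.sigma_le_of_norm_add_le hxa hcone
  have hnorm := S.norm_le_of_norm_add_le hxa hcone
  have hriesz : ‖S.j (xm - x0)‖ - β * √S.aA * S.sigma (xm - x0) ≤ D * ε :=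
    (inv_mul_le_iff₀ hD).mp <| (hSRP _).trans <| by simpa only [map_sub] using hfeas
  rw [Real.sqrt_mul' _ S.sA_nonneg] at hβ1 ⊢
  set a := √S.aA
  set s := √S.sA
  have hc : 0 < 1 - β * (a * s) := sub_pos.mpr (mul_lt_one_of_lt_one_div hβ0 hβ1)
  have hj_bound : ‖S.j (xm - x0)‖ * (1 - β * (a * s)) ≤ 2 * β * a * S.sigma x0 + D * ε := by
    nlinarith [mul_le_mul_of_nonneg_left hσ (by positivity : 0 ≤ β * a)]
  rw [← map_sub]
  constructor
  · rw [div_mul_eq_mul_div, div_mul_eq_mul_div, div_mul_eq_mul_div, ← add_div,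
      le_div_iff₀ hc]
    nlinarith [(by positivity : 0 ≤ a * S.sigma x0), (by positivity : 0 ≤ a * s * (D * ε))]
  · rw [div_mul_eq_mul_div, div_mul_eq_mul_div, div_mul_eq_mul_div, ← add_div,
      le_div_iff₀ hc]
    nlinarith [mul_le_mul_of_nonneg_right hnorm hc.le,
      mul_le_mul_of_nonneg_left hj_bound (by positivity : 0 ≤ 2 * s)]

/-- For a sparse approximation triple `(A, M, H1)` and a bounded *linear*
operator `F : H1 → H2` with the sparse Riesz property (constants `D > 0` and
`β ∈ (0, 1/√(a_A s_A))`), the minimizer `x⁰_M` of `‖·‖_M` over `{x̂ : ‖F(x̂) − F(x⁰)‖ ≤ ε}` is a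
suboptimal approximation of `x⁰`. -/
theorem sparse_optimization_suboptimal_linear
    {H1 : Type*} [NormedAddCommGroup H1] [InnerProductSpace ℝ H1] [CompleteSpace H1]
    {H2 : Type*} [NormedAddCommGroup H2] [InnerProductSpace ℝ H2] [CompleteSpace H2]
    {M : Type*} [NormedAddCommGroup M] [NormedSpace ℝ M] [CompleteSpace M]
    {I : Type*} (S : SparseApproxTriple H1 M I)
    (F : H1 →L[ℝ] H2)
    (D β : ℝ) (hD : 0 < D) (hβ0 : 0 < β) (hβ1 : β < 1 / Real.sqrt (S.aA * S.sA))
    (hSRP : ∀ x : M,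
      D⁻¹ * (‖S.j x‖ - β * Real.sqrt S.aA * S.sigma x) ≤ ‖F (S.j x)‖)
    (x0 : M) (ε : ℝ) (hε : 0 < ε)
    (xm : M) (hfeas : ‖F (S.j xm) - F (S.j x0)‖ ≤ ε)
    (hmin : ∀ y : M, ‖F (S.j y) - F (S.j x0)‖ ≤ ε → ‖xm‖ ≤ ‖y‖) :
    ‖S.j xm - S.j x0‖ ≤
        (2 + 4 * β) / (1 - β * Real.sqrt (S.aA * S.sA)) * Real.sqrt S.aA * S.sigma x0 +
        (2 + Real.sqrt (S.aA * S.sA)) * D / (1 - β * Real.sqrt (S.aA * S.sA)) * ε ∧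
      ‖xm - x0‖ ≤
        (2 + 2 * β * Real.sqrt (S.aA * S.sA)) / (1 - β * Real.sqrt (S.aA * S.sA)) * S.sigma x0 +
        2 * D / (1 - β * Real.sqrt (S.aA * S.sA)) * Real.sqrt S.sA * ε :=
  sparse_optimization_suboptimal_linear_general S F D β hD hβ0 hβ1 hSRP x0 ε xm hfeas hmin
end
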